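/- arXiv:math/0409391 — 8 statements merged into one kernel-verified Lean document; each statement's English description precedes it below -/
import Mathlib

section
/- Let X and M be compact metric spaces, f : X × M → M a continuous map, t₀ ∈ X, θ a Borel probability measure on X, and μ a nonzero Borel probability measure on M that is stationary for (f, θ). Assume the non-degeneracy condition: there is δ₁ > 0 such that for every x ∈ M the set {f(t, x) : t ∈ supp θ} contains the open ball of radius δ₁ centered at f(t₀, x). Then for every x in the support of μ, the open ball of radius δ₁ around f(t₀, x) is contained in the support of μ; in particular, the support of μ contains an open ball of radius δ₁. -/
open MeasureTheory

/-- The support of a Borel measure: the set of points all of whose open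
neighborhoods have positive measure. -/
def measSupport {Z : Type*} [TopologicalSpace Z] [MeasurableSpace Z]
    (ν : Measure Z) : Set Z :=
  {z | ∀ U : Set Z, IsOpen U → z ∈ U → 0 < ν U}

/-- The support of a nonzero measure on a compact space is nonempty. -/
lemma measSupport_nonempty {Z : Type*} [MetricSpace Z] [CompactSpace Z]
    [MeasurableSpace Z] [BorelSpace Z] (ν : Measure Z) [IsProbabilityMeasure ν] :
    ∃ z, z ∈ measSupport ν := by
  by_contra h
  push_neg at h
  simp only [measSupport, Set.mem_setOf_eq, not_forall] at h
  choose U hUopen hzU hU0 using h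
  have hU0 : ∀ z, ν (U z) = 0 := fun z => le_antisymm (not_lt.mp (hU0 z)) bot_le
  obtain ⟨s, hs⟩ := isCompact_univ.elim_finite_subcover U hUopen
    (fun z _ => Set.mem_iUnion.mpr ⟨z, hzU z⟩)
  have : ν Set.univ = 0 := by
    refine le_antisymm (le_trans (measure_mono hs) ?_) bot_le
    refine le_trans (measure_biUnion_finset_le s U) ?_
    simp [hU0]
  simp [measure_univ] at this

/-- Under the non-degeneracy condition ND1 (the image of `x` under the
perturbed maps contains a `δ₁`-ball around `f (t₀, x)`), the support of a stationary
measure contains, around the image `f (t₀, x)` of each of its points `x`, an open ball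
of radius `δ₁`; in particular the support contains an open ball of radius `δ₁`. -/
theorem support_stationary_contains_ball
    {X M : Type*} [MetricSpace X] [CompactSpace X] [MeasurableSpace X] [BorelSpace X]
    [MetricSpace M] [CompactSpace M] [MeasurableSpace M] [BorelSpace M]
    (f : X × M → M) (hf : Continuous f) (t₀ : X)
    (θ : Measure X) [IsProbabilityMeasure θ]
    (μ : Measure M) [IsProbabilityMeasure μ] (hμ : μ ≠ 0)
    (hstat : ∀ φ : C(M, ℝ), ∫ t, ∫ x, φ (f (t, x)) ∂μ ∂θ = ∫ x, φ x ∂μ)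
    (δ₁ : ℝ) (hδ₁ : 0 < δ₁)
    (hND : ∀ x : M, Metric.ball (f (t₀, x)) δ₁ ⊆
      {y | ∃ t ∈ measSupport θ, f (t, x) = y}) :
    (∀ x ∈ measSupport μ, Metric.ball (f (t₀, x)) δ₁ ⊆ measSupport μ) ∧
      ∃ y : M, Metric.ball y δ₁ ⊆ measSupport μ := by
  have main : ∀ x ∈ measSupport μ, Metric.ball (f (t₀, x)) δ₁ ⊆ measSupport μ := by
    intro x₀ hx₀ y hy
    obtain ⟨t, ht, hty⟩ := hND x₀ hy
    intro U hU hyU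
    by_contra hcon
    have hU0 : μ U = 0 := le_antisymm (not_lt.mp hcon) bot_le
    -- choose r > 0 with closedBall y r ⊆ U
    obtain ⟨r, hr, hrU⟩ := (Metric.nhds_basis_closedBall.mem_iff).mp (hU.mem_nhds hyU)
    -- Urysohn function: 0 on Uᶜ, 1 on closedBall y r
    obtain ⟨φ, hφ0, hφ1, hφ01⟩ := exists_continuous_zero_one_of_isClosed
      (isClosed_compl_iff.mpr hU) Metric.isClosed_closedBall
      (disjoint_compl_left.mono_right hrU)
    have hφnn : ∀ z, 0 ≤ φ z := fun z => (hφ01 z).1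
    -- the μ-integral of φ vanishes
    have hint0 : ∫ x, φ x ∂μ = 0 := by
      have hae : φ =ᵐ[μ] 0 := by
        have h1 : ∀ᵐ a ∂μ, a ∉ U := (measure_eq_zero_iff_ae_notMem).mp hU0
        filter_upwards [h1] with a ha
        exact hφ0 ha
      exact integral_eq_zero_of_ae hae
    -- product neighborhood
    have hyO : (t, x₀) ∈ f ⁻¹' Metric.ball y r := by
      simp [Set.mem_preimage, hty, Metric.mem_ball, hr]
    obtain ⟨V, W, hVopen, hWopen, htV, hxW, hVW⟩ :=
      isOpen_prod_iff.mp (hf.isOpen_preimage _ Metric.isOpen_ball) t x₀ hyO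
    have hφone : ∀ s ∈ V, ∀ w ∈ W, φ (f (s, w)) = 1 := by
      intro s hs w hw
      exact hφ1 (Metric.ball_subset_closedBall (hVW (Set.mk_mem_prod hs hw)))
    have hθV : 0 < θ V := ht V hVopen htV
    have hμW : 0 < μ W := hx₀ W hWopen hxW
    -- the inner integral
    set g : X → ℝ := fun s => ∫ x, φ (f (s, x)) ∂μ with hg_def
    have hg_cont : Continuous g := by
      refine continuous_of_dominated (bound := fun _ => ‖φ‖) (fun s => ?_) (fun s => ?_) ?_ ?_
      · exact (φ.continuous.comp (hf.comp (Continuous.prodMk_right s))).aestronglyMeasurable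
      · exact Filter.Eventually.of_forall fun x => φ.norm_coe_le_norm _
      · exact integrable_const _
      · exact Filter.Eventually.of_forall fun x =>
          φ.continuous.comp (hf.comp (continuous_id.prodMk continuous_const))
    have hg_int : Integrable g θ := by
      rw [← integrableOn_univ]
      exact hg_cont.continuousOn.integrableOn_compact isCompact_univ
    have hg_nonneg : ∀ s, 0 ≤ g s := fun s => integral_nonneg fun x => hφnn _
    -- lower bound on g on V
    have hgV : ∀ s ∈ V, (μ W).toReal ≤ g s := by
      intro s hs
      have hfi : Integrable (fun x => φ (f (s, x))) μ := by
        rw [← integrableOn_univ]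
        exact ((φ.continuous.comp (hf.comp (Continuous.prodMk_right s))).continuousOn).integrableOn_compact
          isCompact_univ
      calc (μ W).toReal = 1 * (μ W).toReal := (one_mul _).symm
        _ ≤ ∫ x in W, φ (f (s, x)) ∂μ :=
            setIntegral_ge_of_const_le_real hWopen.measurableSet (measure_ne_top μ W)
              (fun w hw => (hφone s hs w hw).ge) hfi.integrableOn
        _ ≤ g s := setIntegral_le_integral hfi (Filter.Eventually.of_forall fun x => hφnn _)
    -- lower bound on the double integral
    have hlow : (μ W).toReal * (θ V).toReal ≤ ∫ s, g s ∂θ :=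
      le_trans (setIntegral_ge_of_const_le_real hVopen.measurableSet (measure_ne_top θ V)
        hgV hg_int.integrableOn)
        (setIntegral_le_integral hg_int (Filter.Eventually.of_forall hg_nonneg))
    have hpos : 0 < (μ W).toReal * (θ V).toReal :=
      mul_pos (ENNReal.toReal_pos hμW.ne' (measure_ne_top μ W))
        (ENNReal.toReal_pos hθV.ne' (measure_ne_top θ V))
    have := hstat φ
    rw [hint0] at this
    rw [show (∫ s, ∫ x, φ (f (s, x)) ∂μ ∂θ) = ∫ s, g s ∂θ from rfl] at this
    linarith
  obtain ⟨x₀, hx₀⟩ := measSupport_nonempty μ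
  exact ⟨main, ⟨f (t₀, x₀), main x₀ hx₀⟩⟩
end

section
/- Let X and M be compact metric spaces, f : X × M → M a continuous map, and t₀ ∈ X. For each k let θ_k be a Borel probability measure on X and μ_k a Borel probability measure on M that is stationary for (f, θ_k). If θ_k converges weakly to the Dirac mass δ_{t₀} and μ_k converges weakly to a Borel probability measure μ, then μ is invariant under the map f_{t₀} = f(t₀, ·) : M → M, i.e. the pushforward of μ under f_{t₀} equals μ. -/
/-!
Stationarity says `∫ φ dμ_k = ∫ F_k dθ_k` with `F_k t = ∫ φ (f (t, x)) dμ_k(x)`. Because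
`t ↦ φ ∘ f (t, ·)` is continuous into `C(M, ℝ)` with the sup norm, `|F_k t - F_k t₀|` is bounded
by the continuous function `ω t = ‖φ ∘ f (t, ·) - φ ∘ f (t₀, ·)‖`, independent of `k` and vanishing
at `t₀`; hence `∫ F_k dθ_k - F_k t₀ → ∫ ω dδ_{t₀} = 0`. Letting `k → ∞` gives
`∫ φ ∘ f (t₀, ·) dμ = ∫ φ dμ` for every continuous `φ`, and such integrals determine `μ`.
-/

open MeasureTheory Filter Topology BoundedContinuousFunction

section
variable {ι X M : Type*} [TopologicalSpace X] [CompactSpace X] [MeasurableSpace X]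
  [OpensMeasurableSpace X] [TopologicalSpace M] [CompactSpace M] [MeasurableSpace M]
  [OpensMeasurableSpace M] {l : Filter ι} {θ : ι → Measure X} [∀ i, IsProbabilityMeasure (θ i)]
  {t₀ : X}

theorem ContinuousMap.integrable_of_compactSpace (ν : Measure M) [IsFiniteMeasure ν]
    (g : C(M, ℝ)) : Integrable g ν :=
  (mkOfCompact g).integrable ν

theorem lipschitzWith_one_integral_continuousMap (ν : Measure M) [IsProbabilityMeasure ν] :
    LipschitzWith 1 fun g : C(M, ℝ) => ∫ x, g x ∂ν :=
  LipschitzWith.of_dist_le_mul fun g h => by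
    rw [NNReal.coe_one, one_mul, dist_eq_norm, dist_eq_norm, ← integral_sub
      (g.integrable_of_compactSpace ν) (h.integrable_of_compactSpace ν)]
    exact (norm_integral_le_norm ν (mkOfCompact (g - h))).trans_eq (norm_mkOfCompact _)

theorem tendsto_integral_sub_apply_of_abs_sub_le
    (hθ : ∀ ψ : C(X, ℝ), Tendsto (fun i => ∫ t, ψ t ∂θ i) l (𝓝 (ψ t₀)))
    {G : ι → C(X, ℝ)} (ω : C(X, ℝ)) (hω : ω t₀ = 0) (hGω : ∀ i t, |G i t - G i t₀| ≤ ω t) :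
    Tendsto (fun i => ∫ t, G i t ∂θ i - G i t₀) l (𝓝 0) := by
  refine squeeze_zero_norm (fun i => ?_) (hω ▸ hθ ω)
  calc ‖∫ t, G i t ∂θ i - G i t₀‖ = ‖∫ t, (G i t - G i t₀) ∂θ i‖ := by
        rw [integral_sub ((G i).integrable_of_compactSpace _) (integrable_const _),
          integral_const, probReal_univ, one_smul]
    _ ≤ ∫ t, ω t ∂θ i :=
        norm_integral_le_of_norm_le (ω.integrable_of_compactSpace _) (.of_forall (hGω i))

theorem tendsto_integral_integral_sub_integral_apply
    (hθ : ∀ ψ : C(X, ℝ), Tendsto (fun i => ∫ t, ψ t ∂θ i) l (𝓝 (ψ t₀)))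
    (Φ : C(X, C(M, ℝ))) (ν : ι → Measure M) [∀ i, IsProbabilityMeasure (ν i)] :
    Tendsto (fun i => ∫ t, ∫ x, Φ t x ∂ν i ∂θ i - ∫ x, Φ t₀ x ∂ν i) l (𝓝 0) :=
  tendsto_integral_sub_apply_of_abs_sub_le (G := fun i =>
      ⟨fun t => ∫ x, Φ t x ∂ν i,
        (lipschitzWith_one_integral_continuousMap (ν i)).continuous.comp Φ.continuous⟩)
    hθ ⟨fun t => dist (Φ t) (Φ t₀), by fun_prop⟩ (dist_self (Φ t₀)) fun i t => by
      simpa [Real.dist_eq] using (lipschitzWith_one_integral_continuousMap (ν i)).dist_le_mul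
        (Φ t) (Φ t₀)
end

/-- Zero-noise limits of stationary measures are invariant measures for
the unperturbed map: if `μ_k` is stationary for `(f, θ_k)`, `θ_k → δ_{t₀}` weakly and
`μ_k → μ` weakly, then `μ` is invariant under `f_{t₀} = f (t₀, ·)`. -/
theorem zero_noise_limit_invariant
    {X M : Type*} [MetricSpace X] [CompactSpace X] [MeasurableSpace X] [BorelSpace X]
    [MetricSpace M] [CompactSpace M] [MeasurableSpace M] [BorelSpace M]
    (f : X × M → M) (hf : Continuous f) (t₀ : X)
    (θ : ℕ → Measure X) [∀ k, IsProbabilityMeasure (θ k)]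
    (μseq : ℕ → Measure M) [∀ k, IsProbabilityMeasure (μseq k)]
    (hstat : ∀ k, ∀ φ : C(M, ℝ),
      ∫ t, ∫ x, φ (f (t, x)) ∂(μseq k) ∂(θ k) = ∫ x, φ x ∂(μseq k))
    (hθ : ∀ ψ : C(X, ℝ), Tendsto (fun k => ∫ t, ψ t ∂(θ k)) atTop
      (nhds (∫ t, ψ t ∂(Measure.dirac t₀))))
    (μ : Measure M) [IsProbabilityMeasure μ]
    (hμ : ∀ φ : C(M, ℝ), Tendsto (fun k => ∫ x, φ x ∂(μseq k)) atTop
      (nhds (∫ x, φ x ∂μ))) :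
    Measure.map (fun x => f (t₀, x)) μ = μ := by
  have hf₀ : Continuous fun x => f (t₀, x) := by fun_prop
  have := Measure.isProbabilityMeasure_map (μ := μ) hf₀.aemeasurable
  refine ext_of_forall_integral_eq_of_IsFiniteMeasure fun φ => ?_
  rw [integral_map hf₀.aemeasurable φ.continuous.aestronglyMeasurable]
  set Φ : C(X, C(M, ℝ)) := (φ.toContinuousMap.comp ⟨f, hf⟩).curry
  have hθ₀ : ∀ ψ : C(X, ℝ), Tendsto (fun k => ∫ t, ψ t ∂θ k) atTop (𝓝 (ψ t₀)) := fun ψ => by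
    simpa using hθ ψ
  have h_stat : ∀ k, ∫ t, ∫ x, Φ t x ∂μseq k ∂θ k = ∫ x, φ.toContinuousMap x ∂μseq k :=
    fun k => hstat k φ.toContinuousMap
  have h_lim :
      Tendsto (fun k => ∫ x, Φ t₀ x ∂μseq k) atTop (𝓝 (∫ x, φ.toContinuousMap x ∂μ)) := by
    simpa only [h_stat, sub_sub_cancel, sub_zero] using (hμ φ.toContinuousMap).sub
      (tendsto_integral_integral_sub_integral_apply hθ₀ Φ μseq)
  exact tendsto_nhds_unique (hμ (Φ t₀)) h_lim
end

section
/- Let U ⊆ ℝ^d be open, F₁ ⊆ U a Borel set whose Hausdorff dimension is strictly smaller than 1, and g : U → ℝ^d a continuously differentiable map such that ‖Dg(x)·v‖ ≥ ‖v‖ for all x ∈ U and v ∈ ℝ^d, with strict inequality ‖Dg(x)·v‖ > ‖v‖ whenever x ∉ F₁ and v ≠ 0. Then for every continuously differentiable curve γ : [0,1] → U with γ'(t) ≠ 0 for all t, the length of g ∘ γ strictly exceeds the length of γ, i.e. ∫₀¹ ‖Dg(γ(t))·γ'(t)‖ dt > ∫₀¹ ‖γ'(t)‖ dt. -/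
open MeasureTheory Set

open scoped RealInnerProductSpace ENNReal NNReal

set_option maxHeartbeats 1000000 in
/-- If a C¹ map `g` on an open set `U ⊆ ℝ^d` never contracts vectors and
strictly expands all nonzero vectors outside a set `F₁` of Hausdorff dimension smaller
than one, then `g` strictly increases the length of every regular C¹ curve in `U`. -/
theorem length_strictly_increases
    {d : ℕ} (U : Set (EuclideanSpace ℝ (Fin d))) (hU : IsOpen U)
    (F₁ : Set (EuclideanSpace ℝ (Fin d))) (hF₁U : F₁ ⊆ U) (hF₁meas : MeasurableSet F₁)
    (hdim : dimH F₁ < 1)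
    (g : EuclideanSpace ℝ (Fin d) → EuclideanSpace ℝ (Fin d))
    (Dg : EuclideanSpace ℝ (Fin d) → EuclideanSpace ℝ (Fin d) →L[ℝ] EuclideanSpace ℝ (Fin d))
    (hg : ∀ x ∈ U, HasFDerivAt g (Dg x) x) (hDgcont : ContinuousOn Dg U)
    (hexp : ∀ x ∈ U, ∀ v, ‖v‖ ≤ ‖Dg x v‖)
    (hstrict : ∀ x ∈ U, x ∉ F₁ → ∀ v, v ≠ 0 → ‖v‖ < ‖Dg x v‖)
    (γ γ' : ℝ → EuclideanSpace ℝ (Fin d))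
    (hγU : ∀ t ∈ Icc (0 : ℝ) 1, γ t ∈ U)
    (hderiv : ∀ t ∈ Icc (0 : ℝ) 1, HasDerivWithinAt γ (γ' t) (Icc (0 : ℝ) 1) t)
    (hcont : ContinuousOn γ' (Icc (0 : ℝ) 1))
    (hreg : ∀ t ∈ Icc (0 : ℝ) 1, γ' t ≠ 0) :
    ∫ t in Icc (0 : ℝ) 1, ‖γ' t‖ < ∫ t in Icc (0 : ℝ) 1, ‖Dg (γ t) (γ' t)‖ := by
  set I : Set ℝ := Icc (0 : ℝ) 1 with hIdef
  have hγcont : ContinuousOn γ I := fun t ht => (hderiv t ht).continuousWithinAt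
  -- Local bi-Lipschitz (antilipschitz) estimate for γ
  have key : ∀ t₀ ∈ I, ∃ δ > 0, ∀ a ∈ I ∩ Metric.closedBall t₀ δ,
      ∀ b ∈ I ∩ Metric.closedBall t₀ δ, dist a b ≤ (2 / ‖γ' t₀‖) * dist (γ a) (γ b) := by
    intro t₀ ht₀
    have hv : γ' t₀ ≠ 0 := hreg t₀ ht₀
    have hvpos : 0 < ‖γ' t₀‖ := norm_pos_iff.2 hv
    obtain ⟨δ, hδpos, hδ⟩ : ∃ δ > 0, ∀ s ∈ I, dist s t₀ < δ → ‖γ' s - γ' t₀‖ < ‖γ' t₀‖ / 2 := by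
      have h := hcont t₀ ht₀
      rw [Metric.continuousWithinAt_iff] at h
      obtain ⟨δ, hδpos, h⟩ := h (‖γ' t₀‖ / 2) (by positivity)
      exact ⟨δ, hδpos, fun s hs hd => by
        have := h hs hd
        rwa [dist_eq_norm] at this⟩
    refine ⟨δ / 2, by positivity, ?_⟩
    set J := I ∩ Metric.closedBall t₀ (δ / 2) with hJdef
    have hJI : J ⊆ I := inter_subset_left
    have hconv : Convex ℝ J := (convex_Icc _ _).inter (convex_closedBall _ _)
    have hinner : ∀ s ∈ J, ‖γ' t₀‖ ^ 2 / 2 ≤ ⟪γ' s, γ' t₀⟫ := by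
      intro s hs
      have h1 : ‖γ' s - γ' t₀‖ < ‖γ' t₀‖ / 2 :=
        hδ s hs.1 (lt_of_le_of_lt (Metric.mem_closedBall.1 hs.2) (by linarith))
      have h2 : |⟪γ' s - γ' t₀, γ' t₀⟫| ≤ ‖γ' s - γ' t₀‖ * ‖γ' t₀‖ := abs_real_inner_le_norm _ _
      have h3 : ⟪γ' s, γ' t₀⟫ = ⟪γ' s - γ' t₀, γ' t₀⟫ + ‖γ' t₀‖ ^ 2 := by
        rw [inner_sub_left, real_inner_self_eq_norm_sq]; ring
      have h4 := (abs_le.1 h2).1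
      nlinarith [norm_nonneg (γ' s - γ' t₀)]
    set c : ℝ := ‖γ' t₀‖ ^ 2 / 2 with hcdef
    set ψ : ℝ → ℝ := fun s => ⟪γ s, γ' t₀⟫ - c * s with hψdef
    have hψmono : MonotoneOn ψ J := by
      apply monotoneOn_of_hasDerivWithinAt_nonneg (f' := fun s => ⟪γ' s, γ' t₀⟫ - c) hconv
      · exact ((hγcont.mono hJI).inner continuousOn_const).sub
          (continuousOn_const.mul continuousOn_id)
      · intro x hx
        have hxJ : x ∈ J := interior_subset hx
        have h1 : HasDerivWithinAt (fun s => ⟪γ s, γ' t₀⟫) (⟪γ' x, γ' t₀⟫) (interior J) x := by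
          have := HasDerivWithinAt.inner ℝ
            ((hderiv x (hJI hxJ)).mono (interior_subset.trans hJI))
            (hasDerivWithinAt_const x (interior J) (γ' t₀))
          simpa using this
        have h2 := h1.sub ((hasDerivWithinAt_id x (interior J)).const_mul c)
        rw [mul_one] at h2
        exact h2
      · intro x hx
        have := hinner x (interior_subset hx)
        simp only [sub_nonneg]
        linarith
    have main : ∀ a ∈ J, ∀ b ∈ J, a ≤ b →
        dist a b ≤ 2 / ‖γ' t₀‖ * dist (γ a) (γ b) := by
      intro a ha b hb hab
      have h1 : ψ a ≤ ψ b := hψmono ha hb hab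
      have h2 : c * (b - a) ≤ ⟪γ b - γ a, γ' t₀⟫ := by
        have he : ⟪γ b - γ a, γ' t₀⟫ = ⟪γ b, γ' t₀⟫ - ⟪γ a, γ' t₀⟫ := inner_sub_left _ _ _
        simp only [hψdef] at h1
        rw [he]; linarith
      have h3 : ⟪γ b - γ a, γ' t₀⟫ ≤ ‖γ b - γ a‖ * ‖γ' t₀‖ := real_inner_le_norm _ _
      have hdab : dist a b = b - a := by
        rw [Real.dist_eq, abs_of_nonpos (by linarith), neg_sub]
      have hdγ : dist (γ a) (γ b) = ‖γ b - γ a‖ := by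
        rw [dist_eq_norm, norm_sub_rev]
      rw [hdab, hdγ, div_mul_eq_mul_div, le_div_iff₀ hvpos]
      nlinarith [norm_nonneg (γ b - γ a)]
    intro a ha b hb
    rcases le_total a b with hab | hab
    · exact main a ha b hb hab
    · rw [dist_comm a b, dist_comm (γ a) (γ b)]; exact main b hb a ha hab
  -- The preimage of F₁ in [0,1] is Lebesgue-null
  have null : volume (γ ⁻¹' F₁ ∩ I) = 0 := by
    choose! δ hδpos hδ using key
    have hcover : I ⊆ ⋃ t ∈ I, Metric.ball t (δ t) := fun x hx =>
      mem_biUnion hx (Metric.mem_ball_self (hδpos x hx))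
    obtain ⟨T, hTI, hTfin, hTcov⟩ := isCompact_Icc.elim_finite_subcover_image
      (fun t _ => Metric.isOpen_ball) hcover
    have piece : ∀ t ∈ T, volume (γ ⁻¹' F₁ ∩ (I ∩ Metric.closedBall t (δ t))) = 0 := by
      intro t ht
      set S := γ ⁻¹' F₁ ∩ (I ∩ Metric.closedBall t (δ t)) with hSdef
      set K : ℝ := 2 / ‖γ' t‖ with hKdef
      have hK0 : 0 ≤ K := by
        have := norm_nonneg (γ' t); positivity
      have hanti : ∀ a ∈ S, ∀ b ∈ S, dist a b ≤ K * dist (γ a) (γ b) := fun a ha b hb =>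
        hδ t (hTI ht) a ha.2 b hb.2
      have hinj : InjOn γ S := by
        intro a ha b hb hab
        have h := hanti a ha b hb
        rw [hab, dist_self, mul_zero] at h
        exact dist_le_zero.1 h
      have hdimS : dimH S < 1 := by
        set h := Function.invFunOn γ S with hhdef
        have himg : h '' (γ '' S) = S := hinj.invFunOn_image subset_rfl
        have hlip : LipschitzOnWith (Real.toNNReal K) h (γ '' S) := by
          apply LipschitzOnWith.of_dist_le_mul
          rintro y₁ ⟨a, ha, rfl⟩ y₂ ⟨b, hb, rfl⟩
          have h1 : h (γ a) = a := hinj.leftInvOn_invFunOn ha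
          have h2 : h (γ b) = b := hinj.leftInvOn_invFunOn hb
          rw [h1, h2, Real.coe_toNNReal _ hK0]
          exact hanti a ha b hb
        calc dimH S = dimH (h '' (γ '' S)) := by rw [himg]
          _ ≤ dimH (γ '' S) := hlip.dimH_image_le
          _ ≤ dimH F₁ := dimH_mono (by rintro y ⟨a, ha, rfl⟩; exact ha.1)
          _ < 1 := hdim
      have hH : μH[(1 : ℝ≥0)] S = 0 :=
        hausdorffMeasure_of_dimH_lt (by exact_mod_cast hdimS)
      rw [← MeasureTheory.hausdorffMeasure_real]
      simpa using hH
    have hsub : γ ⁻¹' F₁ ∩ I ⊆ ⋃ t ∈ T, γ ⁻¹' F₁ ∩ (I ∩ Metric.closedBall t (δ t)) := by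
      intro x hx
      obtain ⟨t, ht, hxt⟩ := mem_iUnion₂.1 (hTcov hx.2)
      exact mem_biUnion ht ⟨hx.1, hx.2, Metric.ball_subset_closedBall hxt⟩
    exact measure_mono_null hsub ((measure_biUnion_null_iff hTfin.countable).2 piece)
  -- Final comparison of the integrals
  set f : ℝ → ℝ := fun t => ‖γ' t‖ with hfdef
  set F : ℝ → ℝ := fun t => ‖Dg (γ t) (γ' t)‖ with hFdef
  have hFcont : ContinuousOn F I :=
    (ContinuousOn.clm_apply (hDgcont.comp hγcont fun t ht => hγU t ht) hcont).norm
  have hfcont : ContinuousOn f I := hcont.norm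
  have hfint : IntegrableOn f I := hfcont.integrableOn_Icc
  have hFint : IntegrableOn F I := hFcont.integrableOn_Icc
  have hle : ∀ t ∈ I, f t ≤ F t := fun t ht => hexp (γ t) (hγU t ht) (γ' t)
  have hpos : 0 < ∫ t in I, (F t - f t) := by
    rw [setIntegral_pos_iff_support_of_nonneg_ae]
    · have hsupp : I \ (γ ⁻¹' F₁ ∩ I) ⊆ Function.support (fun t => F t - f t) ∩ I := by
        intro t ht
        have htI : t ∈ I := ht.1
        have htF : t ∉ γ ⁻¹' F₁ := fun h => ht.2 ⟨h, htI⟩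
        have hlt : f t < F t := hstrict (γ t) (hγU t htI) htF (γ' t) (hreg t htI)
        exact ⟨sub_ne_zero.2 (ne_of_gt hlt), htI⟩
      calc (0 : ℝ≥0∞) < volume (I \ (γ ⁻¹' F₁ ∩ I)) := by
            rw [measure_diff_null null, hIdef, Real.volume_Icc]
            norm_num
        _ ≤ _ := measure_mono hsupp
    · refine (ae_restrict_iff' measurableSet_Icc).2 (ae_of_all _ fun t ht => ?_)
      exact sub_nonneg.2 (hle t ht)
    · exact hFint.sub hfint
  have heq : ∫ t in I, (F t - f t) = (∫ t in I, F t) - ∫ t in I, f t :=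
    integral_sub hFint hfint
  rw [heq] at hpos
  linarith
end

section
/- Let g : ℝ → ℝ be a continuous map satisfying g(x+1) = g(x) + 2 for all x ∈ ℝ and g(b) − g(a) > b − a for all real numbers a < b. Then for all real numbers a < b there exists an integer n ≥ 1 such that gⁿ(b) − gⁿ(a) ≥ 1, where gⁿ denotes the n-th iterate of g. (Consequently the induced degree-two circle map sends every nondegenerate arc of ℝ/ℤ onto the full circle after finitely many iterates.) -/
/-!
For a fixed length `d > 0`, the excess `g (x + d) - g x - d` is continuous, positive and
`1`-periodic, so it is bounded below by some `m > 0`. Hence every arc of length at least `d`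
grows by at least `m` under `g`, and after `n` iterates an arc of length `d` has length at
least `d + n m`, which eventually exceeds `1`.
-/

open Function Set

theorem Function.Periodic.exists_pos_le_of_continuous {f : ℝ → ℝ} {c : ℝ} (hp : Periodic f c)
    (hc : c ≠ 0) (hf : Continuous f) (hpos : ∀ x, 0 < f x) : ∃ m > 0, ∀ x, m ≤ f x := by
  obtain ⟨_, ⟨t, rfl⟩, ht⟩ := (hp.compact_of_continuous hc hf).exists_isLeast (range_nonempty f)
  exact ⟨f t, hpos t, fun x => ht ⟨x, rfl⟩⟩

section Expanding

variable {g : ℝ → ℝ}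

theorem exists_pos_forall_add_le_apply_add_sub {c : ℝ} (hg : Continuous g)
    (hlift : ∀ x, g (x + 1) = g x + c) (hexp : ∀ a b, a < b → b - a < g b - g a)
    {d : ℝ} (hd : 0 < d) : ∃ m > 0, ∀ x, d + m ≤ g (x + d) - g x := by
  have hper : Periodic (fun x => g (x + d) - g x - d) 1 := fun x => by
    simp only [add_right_comm x 1 d, hlift]
    ring
  obtain ⟨m, hm, hle⟩ := hper.exists_pos_le_of_continuous one_ne_zero (by fun_prop)
    fun x => by linarith [hexp x (x + d) (by linarith)]
  exact ⟨m, hm, fun x => by linarith [hle x]⟩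

theorem sub_add_le_apply_sub_of_add_le (hexp : ∀ a b, a < b → b - a < g b - g a) {d m : ℝ}
    (hgap : ∀ x, d + m ≤ g (x + d) - g x) {x y : ℝ} (hxy : x + d ≤ y) :
    y - x + m ≤ g y - g x := by
  have hmid : y - (x + d) ≤ g y - g (x + d) := by
    rcases hxy.eq_or_lt with heq | hlt
    · simp [heq]
    · exact (hexp _ _ hlt).le
  linarith [hgap x]

theorem sub_add_mul_le_iterate_sub {d m : ℝ} (hm : 0 ≤ m)
    (hgrow : ∀ x y, x + d ≤ y → y - x + m ≤ g y - g x) (n : ℕ) {x y : ℝ} (hxy : x + d ≤ y) :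
    y - x + n * m ≤ g^[n] y - g^[n] x := by
  induction n generalizing x y with
  | zero => simp
  | succ n ih =>
    have hstep := hgrow x y hxy
    have hnext := ih (x := g x) (y := g y) (by linarith)
    rw [iterate_succ_apply, iterate_succ_apply]
    push_cast
    linarith

end Expanding

/-- For a lift `g` of a degree-two circle map which strictly increases
the length of every arc, every arc grows to length at least one after finitely many
iterates; hence the induced circle map eventually maps every nondegenerate arc onto
the whole circle. -/
theorem arc_grows_to_full_circle
    (g : ℝ → ℝ) (hg : Continuous g)
    (hlift : ∀ x : ℝ, g (x + 1) = g x + 2)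
    (hexp : ∀ a b : ℝ, a < b → b - a < g b - g a) :
    ∀ a b : ℝ, a < b → ∃ n : ℕ, 1 ≤ n ∧ 1 ≤ g^[n] b - g^[n] a := by
  intro a b hab
  have hd : 0 < b - a := sub_pos.mpr hab
  obtain ⟨m, hm, hgap⟩ := exists_pos_forall_add_le_apply_add_sub hg hlift hexp hd
  obtain ⟨n, hn⟩ := Archimedean.arch (1 - (b - a)) hm
  rw [nsmul_eq_mul] at hn
  have hlen := sub_add_mul_le_iterate_sub hm.le
    (fun x y => sub_add_le_apply_sub_of_add_le hexp hgap) (n + 1) (x := a) (y := b) (by linarith)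
  refine ⟨n + 1, Nat.le_add_left 1 n, ?_⟩
  push_cast at hlen
  linarith [add_one_mul (n : ℝ) m]
end

section
/- Let C ⊂ [0,1] be the middle-thirds Cantor set, let β(x) = dist(x, C) for x ∈ [0,1], and set c = ∫₀¹ β(t) dt. Define g₀ : [0,1] → ℝ by g₀(x) = x + (1/c)·∫₀ˣ β(t) dt. Then: (i) c > 0; (ii) g₀(0) = 0 and g₀(1) = 2; (iii) g₀ is differentiable on [0,1] with g₀'(x) = 1 + β(x)/c, and g₀' is Lipschitz continuous (with Lipschitz constant 1/c); (iv) g₀'(x) = 1 if and only if x ∈ C, and g₀'(x) > 1 for x ∈ [0,1] \ C; (v) g₀(b) − g₀(a) > b − a for all 0 ≤ a < b ≤ 1. -/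
open MeasureTheory Set

/-- The distance to the middle-thirds Cantor set. -/
noncomputable def cantorBeta (x : ℝ) : ℝ := Metric.infDist x cantorSet

/-- The normalizing constant `c = ∫₀¹ dist(t, C) dt`. -/
noncomputable def cantorC : ℝ := ∫ t in (0 : ℝ)..1, cantorBeta t

/-- The map `g₀(x) = x + (1/c) ∫₀ˣ dist(t, C) dt`. -/
noncomputable def gZero (x : ℝ) : ℝ := x + (1 / cantorC) * ∫ t in (0 : ℝ)..x, cantorBeta t

lemma preCantorSet_subset_unitInterval' (n : ℕ) : preCantorSet n ⊆ Icc 0 1 := by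
  induction n with
  | zero => exact le_refl _
  | succ n ih =>
    rintro z (⟨w, hw, rfl⟩ | ⟨w, hw, rfl⟩) <;>
      obtain ⟨h0, h1⟩ := ih hw <;> constructor <;> norm_num <;> linarith

lemma icc_subset_preCantorSet_len (n : ℕ) : ∀ x y : ℝ, x ≤ y →
    Icc x y ⊆ preCantorSet n → y - x ≤ (1/3 : ℝ) ^ n := by
  induction n with
  | zero =>
    intro x y hxy h
    obtain ⟨hx0, _⟩ := h (left_mem_Icc.mpr hxy)
    obtain ⟨_, hy1⟩ := h (right_mem_Icc.mpr hxy)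
    simpa using by linarith
  | succ n ih =>
    intro x y hxy h
    have hP := preCantorSet_subset_unitInterval' n
    have hy := h (right_mem_Icc.mpr hxy)
    rcases hy with ⟨w0, hw0, hw0e⟩ | ⟨w0, hw0, hw0e⟩
    · -- y = w0 / 3 ≤ 1/3
      have hy3 : y ≤ 1/3 := by
        have := (hP hw0).2; rw [← hw0e]; linarith
      have hsub : Icc (3*x) (3*y) ⊆ preCantorSet n := by
        intro u hu
        have hu3 : u / 3 ∈ Icc x y := ⟨by linarith [hu.1], by linarith [hu.2]⟩
        rcases h hu3 with ⟨w, hw, hwe⟩ | ⟨w, hw, hwe⟩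
        · have : w = u := by field_simp at hwe; linarith
          rwa [← this]
        · exfalso
          have hw0' := (hP hw).1
          have : u = 2 + w := by field_simp at hwe; linarith
          have : u ≤ 3 * y := hu.2
          linarith [hu.2]
      have := ih (3*x) (3*y) (by linarith) hsub
      have h3 : ((1:ℝ)/3) ^ (n+1) = (1/3)^n / 3 := by ring
      linarith [this, h3 ▸ le_refl (((1:ℝ)/3)^(n+1))]
    · -- y = (2 + w0)/3 ≥ 2/3
      have hy3 : 2/3 ≤ y := by
        have := (hP hw0).1; rw [← hw0e]; linarith
      have hsub : Icc (3*x - 2) (3*y - 2) ⊆ preCantorSet n := by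
        intro u hu
        have hu3 : (2 + u) / 3 ∈ Icc x y := ⟨by linarith [hu.1], by linarith [hu.2]⟩
        rcases h hu3 with ⟨w, hw, hwe⟩ | ⟨w, hw, hwe⟩
        · exfalso
          have hw1 := (hP hw).2
          have hz : (2+u)/3 ≤ 1/3 := by rw [← hwe]; linarith
          have hhalf : (1/2 : ℝ) ∈ Icc x y := ⟨by linarith [hu3.1], by linarith⟩
          rcases h hhalf with ⟨v, hv, hve⟩ | ⟨v, hv, hve⟩
          · have := (hP hv).2; rw [div_eq_iff (by norm_num : (3:ℝ) ≠ 0)] at hve; linarith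
          · have := (hP hv).1; rw [div_eq_iff (by norm_num : (3:ℝ) ≠ 0)] at hve; linarith
        · have : w = u := by field_simp at hwe; linarith
          rwa [← this]
      have := ih (3*x - 2) (3*y - 2) (by linarith) hsub
      have h3 : ((1:ℝ)/3) ^ (n+1) = (1/3)^n / 3 := by ring
      linarith

/-- Every nonempty open interval contains a point off the Cantor set. -/
lemma exists_not_mem_cantorSet {a b : ℝ} (hab : a < b) :
    ∃ x ∈ Ioo a b, x ∉ cantorSet := by
  by_contra hcon
  push_neg at hcon
  have hsub : Ioo a b ⊆ cantorSet := fun x hx => hcon x hx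
  obtain ⟨n, hn⟩ := exists_pow_lt_of_lt_one (show (0:ℝ) < (b - a)/2 by linarith)
    (show (1:ℝ)/3 < 1 by norm_num)
  set a' := (3*a + b)/4 with ha'
  set b' := (a + 3*b)/4 with hb'
  have h1 : Icc a' b' ⊆ Ioo a b := fun z hz => ⟨by linarith [hz.1], by linarith [hz.2]⟩
  have h2 : Icc a' b' ⊆ preCantorSet n :=
    fun z hz => (Set.iInter_subset _ n) (hsub (h1 hz))
  have := icc_subset_preCantorSet_len n a' b' (by simp only [ha', hb']; linarith) h2
  have hlen : b' - a' = (b - a)/2 := by simp only [ha', hb']; ring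
  linarith

lemma cantorBeta_nonneg (x : ℝ) : 0 ≤ cantorBeta x := Metric.infDist_nonneg

lemma cantorBeta_continuous : Continuous cantorBeta := Metric.continuous_infDist_pt _

lemma cantorBeta_pos_of_not_mem {x : ℝ} (hx : x ∉ cantorSet) : 0 < cantorBeta x :=
  (isClosed_cantorSet.notMem_iff_infDist_pos ⟨0, zero_mem_cantorSet⟩).mp hx

lemma cantorBeta_eq_zero_iff {x : ℝ} : cantorBeta x = 0 ↔ x ∈ cantorSet :=
  (isClosed_cantorSet.mem_iff_infDist_zero ⟨0, zero_mem_cantorSet⟩).symm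

lemma cantorBeta_intervalIntegrable (a b : ℝ) :
    IntervalIntegrable cantorBeta volume a b :=
  cantorBeta_continuous.intervalIntegrable a b

lemma integral_cantorBeta_pos {a b : ℝ} (hab : a < b) :
    0 < ∫ t in a..b, cantorBeta t := by
  obtain ⟨x₀, hx₀, hx₀c⟩ := exists_not_mem_cantorSet hab
  have hβ := cantorBeta_pos_of_not_mem hx₀c
  set ε := cantorBeta x₀ / 2 with hε
  set c := max a (x₀ - ε) with hc
  set d := min b (x₀ + ε) with hd
  have hac : a ≤ c := le_max_left _ _
  have hdb : d ≤ b := min_le_left _ _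
  have hcd : c < d := by
    apply lt_min <;> [skip; skip] <;> apply max_lt <;>
      first
      | linarith [hx₀.1, hx₀.2]
  have hpos : ∀ z ∈ Ioo c d, 0 < cantorBeta z := by
    intro z hz
    have h1 : x₀ - ε < z := lt_of_le_of_lt (le_max_right _ _) hz.1
    have h2 : z < x₀ + ε := lt_of_lt_of_le hz.2 (min_le_right _ _)
    have hlip : cantorBeta x₀ - cantorBeta z ≤ |x₀ - z| := by
      have := (Metric.lipschitz_infDist_pt cantorSet).dist_le_mul x₀ z
      rw [Real.dist_eq] at this
      simp only [NNReal.coe_one, one_mul] at this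
      calc cantorBeta x₀ - cantorBeta z ≤ |cantorBeta x₀ - cantorBeta z| := le_abs_self _
        _ ≤ |x₀ - z| := by rw [Real.dist_eq] at this; exact this
    have : |x₀ - z| < ε := abs_sub_lt_iff.mpr ⟨by linarith, by linarith⟩
    linarith
  have hmid : 0 < ∫ t in c..d, cantorBeta t :=
    intervalIntegral.intervalIntegral_pos_of_pos_on (cantorBeta_intervalIntegrable c d) hpos hcd
  have hsplit : (∫ t in a..b, cantorBeta t) =
      (∫ t in a..c, cantorBeta t) + (∫ t in c..d, cantorBeta t) + (∫ t in d..b, cantorBeta t) := by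
    rw [intervalIntegral.integral_add_adjacent_intervals (cantorBeta_intervalIntegrable a c)
          (cantorBeta_intervalIntegrable c d),
        intervalIntegral.integral_add_adjacent_intervals (cantorBeta_intervalIntegrable a d)
          (cantorBeta_intervalIntegrable d b)]
  have h1 : 0 ≤ ∫ t in a..c, cantorBeta t :=
    intervalIntegral.integral_nonneg hac (fun u _ => cantorBeta_nonneg u)
  have h2 : 0 ≤ ∫ t in d..b, cantorBeta t :=
    intervalIntegral.integral_nonneg hdb (fun u _ => cantorBeta_nonneg u)
  linarith

/-- Properties of the Cantor-set example `g₀`: the normalizing constant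
is positive; `g₀ 0 = 0` and `g₀ 1 = 2`; `g₀` is differentiable on `[0,1]` with
derivative `1 + β(x)/c` which is Lipschitz with constant `1/c`; the derivative equals
`1` exactly on the Cantor set and exceeds `1` off it; and `g₀` strictly increases the
length of every subinterval of `[0,1]`. -/
theorem gZero_properties :
    0 < cantorC ∧
    (gZero 0 = 0 ∧ gZero 1 = 2) ∧
    ((∀ x ∈ Icc (0 : ℝ) 1,
        HasDerivWithinAt gZero (1 + cantorBeta x / cantorC) (Icc (0 : ℝ) 1) x) ∧
      LipschitzOnWith (Real.toNNReal (1 / cantorC))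
        (fun x => 1 + cantorBeta x / cantorC) (Icc (0 : ℝ) 1)) ∧
    (∀ x ∈ Icc (0 : ℝ) 1,
      (1 + cantorBeta x / cantorC = 1 ↔ x ∈ cantorSet) ∧
      (x ∉ cantorSet → 1 < 1 + cantorBeta x / cantorC)) ∧
    (∀ a b : ℝ, 0 ≤ a → a < b → b ≤ 1 → b - a < gZero b - gZero a) := by
  have c_pos : 0 < cantorC := integral_cantorBeta_pos one_pos
  refine ⟨c_pos, ⟨?_, ?_⟩, ⟨?_, ?_⟩, ?_, ?_⟩
  · simp [gZero]
  · have : (∫ t in (0:ℝ)..1, cantorBeta t) = cantorC := rfl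
    rw [gZero, this, one_div, inv_mul_cancel₀ c_pos.ne']
    norm_num
  · intro x _
    have h1 : HasDerivAt gZero (1 + 1/cantorC * cantorBeta x) x := by
      have := (hasDerivAt_id x).add
        (HasDerivAt.const_mul (1/cantorC)
          (cantorBeta_continuous.integral_hasStrictDerivAt 0 x).hasDerivAt)
      unfold gZero
      exact this
    have h2 : (1 : ℝ) + 1/cantorC * cantorBeta x = 1 + cantorBeta x / cantorC := by ring
    exact (h2 ▸ h1).hasDerivWithinAt
  · have hl : LipschitzWith (Real.toNNReal (1 / cantorC))
        (fun x => 1 + cantorBeta x / cantorC) := by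
      apply LipschitzWith.of_dist_le_mul
      intro x y
      have h := (Metric.lipschitz_infDist_pt cantorSet).dist_le_mul x y
      simp only [NNReal.coe_one, one_mul] at h
      rw [Real.coe_toNNReal _ (by positivity : (0:ℝ) ≤ 1/cantorC)]
      have heq : (1 + cantorBeta x / cantorC) - (1 + cantorBeta y / cantorC)
          = (cantorBeta x - cantorBeta y) / cantorC := by ring
      rw [Real.dist_eq, Real.dist_eq] at h ⊢
      rw [heq, abs_div, abs_of_pos c_pos]
      rw [div_le_iff₀ c_pos]
      calc |cantorBeta x - cantorBeta y| ≤ |x - y| := h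
        _ = 1 / cantorC * |x - y| * cantorC := by field_simp
    exact hl.lipschitzOnWith
  · intro x _
    constructor
    · constructor
      · intro h
        have h0 : cantorBeta x / cantorC = 0 := by linarith
        have := (div_eq_zero_iff.mp h0).resolve_right c_pos.ne'
        exact cantorBeta_eq_zero_iff.mp this
      · intro h
        rw [cantorBeta_eq_zero_iff.mpr h]
        simp
    · intro h
      have := div_pos (cantorBeta_pos_of_not_mem h) c_pos
      linarith
  · intro a b _ hab _
    have hdiff : gZero b - gZero a
        = (b - a) + (1/cantorC) * ∫ t in a..b, cantorBeta t := by
      simp only [gZero]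
      rw [← intervalIntegral.integral_interval_sub_left
        (cantorBeta_intervalIntegrable 0 b) (cantorBeta_intervalIntegrable 0 a)]
      ring
    have hip := integral_cantorBeta_pos hab
    have : 0 < (1/cantorC) * ∫ t in a..b, cantorBeta t :=
      mul_pos (by positivity) hip
    linarith
end

section
/- Let C ⊂ [0,1] be the middle-thirds Cantor set, β(x) = dist(x, C), c = ∫₀¹ β(t) dt, and g₀(x) = x + (1/c)·∫₀ˣ β(t) dt for x ∈ [0,1]. Define the lift G : ℝ → ℝ by G(x) = g₀(x − ⌊x⌋) + 2⌊x⌋. Then G is continuous, strictly increasing, satisfies G(x+1) = G(x) + 2 for all x ∈ ℝ, and for all real numbers a < b there exists an integer n ≥ 1 with Gⁿ(b) − Gⁿ(a) ≥ 1; hence the degree-two circle map of ℝ/ℤ induced by g₀ maps every nondegenerate arc onto the whole circle after finitely many iterates. -/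
open MeasureTheory Set

/-- The lift `G(x) = g₀(x − ⌊x⌋) + 2⌊x⌋` of the induced degree-two circle map. -/
noncomputable def gLift (x : ℝ) : ℝ := gZero (x - ⌊x⌋) + 2 * (⌊x⌋ : ℝ)

/- ### Auxiliary lemmas -/

lemma le_infDist_aux {s : Set ℝ} (hs : s.Nonempty) {x b : ℝ} (h : ∀ y ∈ s, b ≤ dist x y) :
    b ≤ Metric.infDist x s := by
  by_contra hlt
  push_neg at hlt
  obtain ⟨y, hy, hd⟩ := (Metric.infDist_lt_iff hs).mp hlt
  exact absurd (h y hy) (by linarith)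

lemma one_mem_preCantorSet (n : ℕ) : (1 : ℝ) ∈ preCantorSet n := by
  induction n with
  | zero => exact ⟨zero_le_one, le_refl 1⟩
  | succ n ih => exact Or.inr ⟨1, ih, by norm_num⟩

lemma one_mem_cantorSet : (1 : ℝ) ∈ cantorSet := mem_iInter.mpr one_mem_preCantorSet

lemma cantorSet_nonempty : cantorSet.Nonempty := ⟨0, zero_mem_cantorSet⟩

lemma preCantorSet_succ_subset (n : ℕ) : preCantorSet (n + 1) ⊆ preCantorSet n := by
  induction n with
  | zero =>
    rintro x (⟨z, hz, rfl⟩ | ⟨z, hz, rfl⟩) <;>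
      simp only [preCantorSet_zero, mem_Icc] at hz ⊢ <;>
      constructor <;> linarith [hz.1, hz.2]
  | succ n ih =>
    rintro x (⟨z, hz, rfl⟩ | ⟨z, hz, rfl⟩)
    · exact Or.inl ⟨z, ih hz, rfl⟩
    · exact Or.inr ⟨z, ih hz, rfl⟩

lemma preCantorSet_anti : Antitone preCantorSet :=
  antitone_nat_of_succ_le preCantorSet_succ_subset

lemma cantorSet_split {y : ℝ} (hy : y ∈ cantorSet) :
    3 * y ∈ cantorSet ∨ 3 * y - 2 ∈ cantorSet := by
  by_cases h : ∀ n, 3 * y ∈ preCantorSet n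
  · exact Or.inl (mem_iInter.mpr h)
  · push_neg at h
    obtain ⟨n, hn⟩ := h
    refine Or.inr (mem_iInter.mpr fun m => ?_)
    have hy' := mem_iInter.mp hy (max n m + 1)
    rcases hy' with ⟨z, hz, hzy⟩ | ⟨z, hz, hzy⟩
    · exfalso
      apply hn
      have hz3 : z = 3 * y := by
        simp only at hzy; linarith
      exact preCantorSet_anti (le_max_left n m) (hz3 ▸ hz)
    · have hz3 : z = 3 * y - 2 := by
        simp only at hzy; linarith
      exact preCantorSet_anti (le_max_right n m) (hz3 ▸ hz)

lemma cantorSet_dichotomy {y : ℝ} (hy : y ∈ cantorSet) : y ≤ 1 / 3 ∨ 2 / 3 ≤ y := by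
  have h1 := mem_iInter.mp hy 1
  rcases h1 with ⟨z, hz, rfl⟩ | ⟨z, hz, rfl⟩ <;>
    simp only [preCantorSet_zero, mem_Icc] at hz
  · left; linarith [hz.2]
  · right; linarith [hz.1]

lemma infDist_ge_of_gap {t e : ℝ} (_he : 0 < e) (h1 : 1 / 3 + e ≤ t) (h2 : t ≤ 2 / 3 - e) :
    e ≤ Metric.infDist t cantorSet := by
  apply le_infDist_aux cantorSet_nonempty
  intro y hy
  rw [Real.dist_eq]
  rcases cantorSet_dichotomy hy with h | h
  · calc e ≤ t - y := by linarith
      _ ≤ |t - y| := le_abs_self _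
  · calc e ≤ -(t - y) := by linarith
      _ ≤ |t - y| := neg_le_abs _

lemma cantor_density (n : ℕ) : ∀ x ∈ Icc (0:ℝ) 1, ∃ t ∈ Icc (0:ℝ) 1,
    |t - x| ≤ (1/3 : ℝ) ^ n ∧ (1/3 : ℝ) ^ n / 6 ≤ Metric.infDist t cantorSet := by
  induction n with
  | zero =>
    intro x hx
    refine ⟨1/2, by norm_num, ?_, ?_⟩
    · rw [pow_zero, abs_le]
      constructor <;> [linarith [hx.2]; linarith [hx.1]]
    · rw [pow_zero]
      exact infDist_ge_of_gap (by norm_num) (by norm_num) (by norm_num)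
  | succ n ih =>
    intro x hx
    have hh : (1/3 : ℝ) ^ (n+1) = (1/3 : ℝ) ^ n / 3 := by ring
    have hpow_pos : (0:ℝ) < (1/3 : ℝ) ^ n := by positivity
    have hpow_le : (1/3 : ℝ) ^ n ≤ 1 := pow_le_one₀ (by norm_num) (by norm_num)
    have hpow_le' : (1/3 : ℝ) ^ (n+1) ≤ 1/3 := by
      rw [hh]; linarith
    rcases le_or_gt x (1/3) with hx3 | hx3
    · obtain ⟨t', ht'mem, ht'c, ht'd⟩ := ih (3*x) ⟨by linarith [hx.1], by linarith⟩
      refine ⟨t'/3, ⟨by linarith [ht'mem.1], by linarith [ht'mem.2]⟩, ?_, ?_⟩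
      · rw [abs_le] at ht'c ⊢
        constructor <;> [linarith [ht'c.1, hh]; linarith [ht'c.2, hh]]
      · apply le_infDist_aux cantorSet_nonempty
        intro y hy
        rcases cantorSet_split hy with h3 | h3
        · have hd := (ht'd.trans (Metric.infDist_le_dist_of_mem h3))
          rw [Real.dist_eq] at hd ⊢
          have habs : |t'/3 - y| = |t' - 3*y| / 3 := by
            rw [show t'/3 - y = (t' - 3*y)/3 by ring, abs_div]
            norm_num
          rw [habs]
          linarith [hh, hd]
        · have hy2 : 3*y - 2 ∈ Icc (0:ℝ) 1 := cantorSet_subset_unitInterval h3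
          have hyb : 2/3 ≤ y := by linarith [hy2.1]
          rw [Real.dist_eq]
          calc (1/3 : ℝ) ^ (n+1) / 6 ≤ 1/3 := by linarith
            _ ≤ -(t'/3 - y) := by linarith [ht'mem.2]
            _ ≤ |t'/3 - y| := neg_le_abs _
    · rcases le_or_gt (2/3) x with hx6 | hx6
      · obtain ⟨t', ht'mem, ht'c, ht'd⟩ := ih (3*x - 2) ⟨by linarith, by linarith [hx.2]⟩
        refine ⟨(t'+2)/3, ⟨by linarith [ht'mem.1], by linarith [ht'mem.2]⟩, ?_, ?_⟩
        · rw [abs_le] at ht'c ⊢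
          constructor <;> [linarith [ht'c.1, hh]; linarith [ht'c.2, hh]]
        · apply le_infDist_aux cantorSet_nonempty
          intro y hy
          rcases cantorSet_split hy with h3 | h3
          · have hy2 : 3*y ∈ Icc (0:ℝ) 1 := cantorSet_subset_unitInterval h3
            have hyb : y ≤ 1/3 := by linarith [hy2.2]
            rw [Real.dist_eq]
            calc (1/3 : ℝ) ^ (n+1) / 6 ≤ 1/3 := by linarith
              _ ≤ (t'+2)/3 - y := by linarith [ht'mem.1]
              _ ≤ |(t'+2)/3 - y| := le_abs_self _
          · have hd := (ht'd.trans (Metric.infDist_le_dist_of_mem h3))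
            rw [Real.dist_eq] at hd ⊢
            have habs : |(t'+2)/3 - y| = |t' - (3*y - 2)| / 3 := by
              rw [show (t'+2)/3 - y = (t' - (3*y-2))/3 by ring, abs_div]
              norm_num
            rw [habs]
            linarith [hh, hd]
      · -- middle case : 1/3 < x < 2/3
        set e : ℝ := (1/3 : ℝ) ^ (n+1) / 6 with he_def
        have he : 0 < e := by positivity
        have he18 : e ≤ 1/18 := by rw [he_def]; linarith
        have hee : e ≤ (1/3 : ℝ) ^ (n+1) := by rw [he_def]; linarith [hpow_pos, hh]
        rcases le_or_gt x (1/3 + e) with hc1 | hc1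
        · refine ⟨1/3 + e, ⟨by linarith, by linarith⟩, ?_,
            infDist_ge_of_gap he le_rfl (by linarith)⟩
          rw [abs_le]
          constructor <;> linarith
        · rcases le_or_gt (2/3 - e) x with hc2 | hc2
          · refine ⟨2/3 - e, ⟨by linarith, by linarith⟩, ?_,
              infDist_ge_of_gap he (by linarith) le_rfl⟩
            rw [abs_le]
            constructor <;> linarith
          · refine ⟨x, hx, ?_, infDist_ge_of_gap he (by linarith) (by linarith)⟩
            simp only [sub_self, abs_zero]
            positivity

/-- The union of all integer translates of the Cantor set. -/
def cantorD : Set ℝ := ⋃ k : ℤ, (fun z : ℝ => z + k) '' cantorSet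

/-- The 1-periodic extension of the distance to the Cantor set. -/
noncomputable def betaP (t : ℝ) : ℝ := Metric.infDist t cantorD

lemma mem_cantorD_of (k : ℤ) {z : ℝ} (hz : z ∈ cantorSet) : z + (k:ℝ) ∈ cantorD :=
  mem_iUnion.mpr ⟨k, z, hz, rfl⟩

lemma cantorD_nonempty : cantorD.Nonempty := ⟨0 + ((0:ℤ):ℝ), mem_cantorD_of 0 zero_mem_cantorSet⟩

lemma mem_cantorD {y : ℝ} (hy : y ∈ cantorD) : ∃ k : ℤ, ∃ z ∈ cantorSet, z + (k:ℝ) = y := by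
  obtain ⟨k, z, hz, rfl⟩ := mem_iUnion.mp hy
  exact ⟨k, z, hz, rfl⟩

lemma betaP_nonneg (t : ℝ) : 0 ≤ betaP t := Metric.infDist_nonneg

lemma betaP_continuous : Continuous betaP := Metric.continuous_infDist_pt _

lemma betaP_shift (k : ℤ) (t : ℝ) : betaP (t + k) = betaP t := by
  have key : ∀ (j : ℤ) (s : ℝ), betaP s ≤ betaP (s + j) := by
    intro j s
    apply le_infDist_aux cantorD_nonempty
    intro y hy
    obtain ⟨k', z, hz, rfl⟩ := mem_cantorD hy
    have hmem : z + ((k' - j : ℤ) : ℝ) ∈ cantorD := mem_cantorD_of (k' - j) hz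
    calc betaP s ≤ dist s (z + ((k' - j : ℤ):ℝ)) := Metric.infDist_le_dist_of_mem hmem
      _ = dist (s + j) (z + (k':ℝ)) := by
          rw [Real.dist_eq, Real.dist_eq]
          push_cast
          congr 1
          ring
  apply le_antisymm
  · have h := key (-k) (t + k)
    rw [show (t + (k:ℝ)) + ((-k : ℤ):ℝ) = t by push_cast; ring] at h
    exact h
  · exact key k t

lemma betaP_eq_cantorBeta {t : ℝ} (ht : t ∈ Icc (0:ℝ) 1) : betaP t = cantorBeta t := by
  apply le_antisymm
  · apply Metric.infDist_le_infDist_of_subset ?_ cantorSet_nonempty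
    intro z hz
    have := mem_cantorD_of 0 hz
    simpa using this
  · apply le_infDist_aux cantorD_nonempty
    intro y hy
    obtain ⟨k, z, hz, rfl⟩ := mem_cantorD hy
    have hz01 := cantorSet_subset_unitInterval hz
    rcases lt_trichotomy k 0 with hk | hk | hk
    · have hk' : (k:ℝ) ≤ -1 := by exact_mod_cast (by omega : k ≤ -1)
      calc cantorBeta t ≤ dist t 0 := Metric.infDist_le_dist_of_mem zero_mem_cantorSet
        _ ≤ dist t (z + k) := by
            rw [Real.dist_eq, Real.dist_eq, sub_zero, abs_of_nonneg ht.1]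
            calc t ≤ t - (z + (k:ℝ)) := by linarith [hz01.2]
              _ ≤ |t - (z + (k:ℝ))| := le_abs_self _
    · subst hk
      have : cantorBeta t ≤ dist t z := Metric.infDist_le_dist_of_mem hz
      simpa using this
    · have hk' : (1:ℝ) ≤ (k:ℝ) := by exact_mod_cast hk
      calc cantorBeta t ≤ dist t 1 := Metric.infDist_le_dist_of_mem one_mem_cantorSet
        _ ≤ dist t (z + k) := by
            rw [Real.dist_eq, Real.dist_eq, abs_of_nonpos (by linarith [ht.2] : t - 1 ≤ 0)]
            calc -(t - 1) ≤ -(t - (z + (k:ℝ))) := by linarith [hz01.1]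
              _ ≤ |t - (z + (k:ℝ))| := neg_le_abs _

lemma exists_betaP_pos {u v : ℝ} (huv : u < v) : ∃ t ∈ Ioo u v, 0 < betaP t := by
  obtain ⟨n, hn⟩ : ∃ n : ℕ, (1/3 : ℝ) ^ n < (v - u)/2 :=
    exists_pow_lt_of_lt_one (by linarith) (by norm_num)
  set m := (u + v)/2 with hm
  have hfr : Int.fract m ∈ Icc (0:ℝ) 1 := ⟨Int.fract_nonneg m, (Int.fract_lt_one m).le⟩
  obtain ⟨t, htmem, htc, htd⟩ := cantor_density n (Int.fract m) hfr
  have hfr' : Int.fract m = m - ⌊m⌋ := rfl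
  rw [abs_le] at htc
  refine ⟨t + (⌊m⌋:ℝ), ⟨by rw [hfr'] at htc; linarith [htc.1, hn], by rw [hfr'] at htc; linarith [htc.2, hn]⟩, ?_⟩
  rw [betaP_shift ⌊m⌋ t, betaP_eq_cantorBeta htmem]
  calc (0:ℝ) < (1/3 : ℝ) ^ n / 6 := by positivity
    _ ≤ Metric.infDist t cantorSet := htd

lemma betaP_ii (a b : ℝ) : IntervalIntegrable betaP volume a b :=
  betaP_continuous.intervalIntegrable a b

lemma integral_betaP_pos {u v : ℝ} (h : u < v) : 0 < ∫ t in u..v, betaP t := by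
  obtain ⟨t₀, ht₀, hpos⟩ := exists_betaP_pos h
  exact intervalIntegral.integral_pos h betaP_continuous.continuousOn
    (fun x _ => betaP_nonneg x) ⟨t₀, ⟨ht₀.1.le, ht₀.2.le⟩, hpos⟩

lemma cantorC_eq : cantorC = ∫ t in (0:ℝ)..1, betaP t := by
  unfold cantorC
  apply intervalIntegral.integral_congr
  intro t ht
  rw [uIcc_of_le zero_le_one] at ht
  exact (betaP_eq_cantorBeta ht).symm

lemma cantorC_pos : 0 < cantorC := by
  rw [cantorC_eq]; exact integral_betaP_pos one_pos

lemma betaP_periodic : Function.Periodic betaP 1 := by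
  intro x
  have := betaP_shift 1 x
  simpa using this

lemma integral_betaP_add_one (x : ℝ) : ∫ t in x..(x+1), betaP t = cantorC := by
  rw [betaP_periodic.intervalIntegral_add_eq x 0, zero_add, cantorC_eq]

lemma integral_betaP_split (x : ℝ) :
    ∫ t in (0:ℝ)..x, betaP t = (∫ t in (0:ℝ)..Int.fract x, betaP t) + ⌊x⌋ * cantorC := by
  have h1 : ∫ t in Int.fract x..x, betaP t = ⌊x⌋ * cantorC := by
    have hx : Int.fract x + (⌊x⌋ : ℤ) • (1:ℝ) = x := by
      rw [zsmul_eq_mul, mul_one]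
      exact Int.fract_add_floor x
    calc ∫ t in Int.fract x..x, betaP t
        = ∫ t in Int.fract x..(Int.fract x + (⌊x⌋ : ℤ) • (1:ℝ)), betaP t := by rw [hx]
      _ = (⌊x⌋ : ℤ) • ∫ t in Int.fract x..(Int.fract x + 1), betaP t :=
          betaP_periodic.intervalIntegral_add_zsmul_eq ⌊x⌋ (Int.fract x) betaP_ii
      _ = ⌊x⌋ * cantorC := by
          rw [integral_betaP_add_one, zsmul_eq_mul]
  rw [← intervalIntegral.integral_add_adjacent_intervals (betaP_ii 0 (Int.fract x))
    (betaP_ii (Int.fract x) x), h1]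

lemma gLift_eq (x : ℝ) : gLift x = x + (1/cantorC) * ∫ t in (0:ℝ)..x, betaP t := by
  have hc := cantorC_pos.ne'
  have hfr : Int.fract x = x - ⌊x⌋ := rfl
  unfold gLift gZero
  have h2 : ∫ t in (0:ℝ)..(x - ⌊x⌋), cantorBeta t = ∫ t in (0:ℝ)..Int.fract x, betaP t := by
    rw [← hfr]
    apply intervalIntegral.integral_congr
    intro t ht
    rw [uIcc_of_le (Int.fract_nonneg x)] at ht
    exact (betaP_eq_cantorBeta ⟨ht.1, ht.2.trans (Int.fract_lt_one x).le⟩).symm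
  rw [h2, integral_betaP_split x, hfr]
  field_simp
  ring

lemma gLift_sub (x y : ℝ) : gLift y - gLift x = (y - x) + (1/cantorC) * ∫ t in x..y, betaP t := by
  rw [gLift_eq, gLift_eq]
  have h := intervalIntegral.integral_add_adjacent_intervals (betaP_ii 0 x) (betaP_ii x y)
  rw [← h]
  ring

lemma gLift_continuous : Continuous gLift := by
  have h : gLift = fun x => x + (1/cantorC) * ∫ t in (0:ℝ)..x, betaP t := funext gLift_eq
  rw [h]
  exact continuous_id.add (continuous_const.mul (intervalIntegral.continuous_primitive betaP_ii 0))

lemma gLift_mono : StrictMono gLift := by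
  intro x y hxy
  have h := gLift_sub x y
  have hint : 0 < ∫ t in x..y, betaP t := integral_betaP_pos hxy
  have hmul : 0 < (1/cantorC) * ∫ t in x..y, betaP t :=
    mul_pos (one_div_pos.mpr cantorC_pos) hint
  have hc := cantorC_pos
  linarith

lemma gLift_add_one (x : ℝ) : gLift (x + 1) = gLift x + 2 := by
  have h := gLift_sub x (x+1)
  rw [integral_betaP_add_one] at h
  have hc : (1/cantorC) * cantorC = 1 := one_div_mul_cancel cantorC_pos.ne'
  linarith [h, hc]

lemma psi_lower {L : ℝ} (hL : 0 < L) : ∃ ε > 0, ∀ x : ℝ, ε ≤ ∫ t in x..(x+L), betaP t := by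
  set ψ : ℝ → ℝ := fun x => ∫ t in x..(x+L), betaP t with hψdef
  have hψc : Continuous ψ := by
    have h1 : ψ = fun x => (∫ t in (0:ℝ)..(x+L), betaP t) - ∫ t in (0:ℝ)..x, betaP t := by
      funext x
      have h := intervalIntegral.integral_add_adjacent_intervals (betaP_ii 0 x) (betaP_ii x (x+L))
      simp only [hψdef]
      linarith
    rw [h1]
    exact (((intervalIntegral.continuous_primitive betaP_ii 0).comp
      (continuous_id.add continuous_const)).sub (intervalIntegral.continuous_primitive betaP_ii 0))
  have hψshift : ∀ x : ℝ, ψ x = ψ (Int.fract x) := by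
    intro x
    have hcomp : ∫ t in Int.fract x..(Int.fract x + L), betaP t
        = ∫ t in Int.fract x..(Int.fract x + L), betaP (t + (⌊x⌋:ℝ)) := by
      apply intervalIntegral.integral_congr
      intro t _
      exact (betaP_shift ⌊x⌋ t).symm
    have hb1 : Int.fract x + (⌊x⌋:ℝ) = x := Int.fract_add_floor x
    have hb2 : Int.fract x + L + (⌊x⌋:ℝ) = x + L := by linarith
    calc ψ x = ∫ t in x..(x+L), betaP t := rfl
      _ = ∫ t in Int.fract x..(Int.fract x + L), betaP (t + (⌊x⌋:ℝ)) := by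
          rw [intervalIntegral.integral_comp_add_right, hb1, hb2]
      _ = ∫ t in Int.fract x..(Int.fract x + L), betaP t := hcomp.symm
      _ = ψ (Int.fract x) := rfl
  obtain ⟨x₀, hx₀mem, hx₀min⟩ :=
    isCompact_Icc.exists_isMinOn (nonempty_Icc.mpr zero_le_one) hψc.continuousOn
  refine ⟨ψ x₀, integral_betaP_pos (by linarith), fun x => ?_⟩
  have hmem : Int.fract x ∈ Icc (0:ℝ) 1 := ⟨Int.fract_nonneg x, (Int.fract_lt_one x).le⟩
  calc ψ x₀ ≤ ψ (Int.fract x) := hx₀min hmem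
    _ = ψ x := (hψshift x).symm

/-- The lift `G` of the degree-two circle map induced by `g₀` is a
continuous, strictly increasing map satisfying `G(x+1) = G(x) + 2`, and every arc
grows to length at least one under finitely many iterates of `G`; hence the induced
circle map maps every nondegenerate arc onto the whole circle after finitely many
iterates. -/
theorem gLift_properties :
    Continuous gLift ∧
    StrictMono gLift ∧
    (∀ x : ℝ, gLift (x + 1) = gLift x + 2) ∧
    (∀ a b : ℝ, a < b → ∃ n : ℕ, 1 ≤ n ∧ 1 ≤ gLift^[n] b - gLift^[n] a) := by
  refine ⟨gLift_continuous, gLift_mono, gLift_add_one, ?_⟩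
  intro a b hab
  rcases le_or_gt 1 (b - a) with hL | hL
  · refine ⟨1, le_refl 1, ?_⟩
    simp only [Function.iterate_one]
    have h1 := gLift_mono.monotone (by linarith : a + 1 ≤ b)
    have h2 := gLift_add_one a
    linarith
  · have hL0 : 0 < b - a := by linarith
    obtain ⟨ε, hε, hψ⟩ := psi_lower hL0
    set L : ℝ := b - a with hLdef
    set ε' : ℝ := (1/cantorC) * ε with hε'def
    have hε'0 : 0 < ε' := mul_pos (one_div_pos.mpr cantorC_pos) hε
    have step : ∀ x y : ℝ, x + L ≤ y → (y - x) + ε' ≤ gLift y - gLift x := by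
      intro x y hxy
      have h1 := gLift_sub x y
      have h2 : ∫ t in x..(x+L), betaP t ≤ ∫ t in x..y, betaP t :=
        intervalIntegral.integral_mono_interval le_rfl (by linarith) hxy
          (Filter.Eventually.of_forall betaP_nonneg) (betaP_ii x y)
      have h4 : (1/cantorC) * (∫ t in x..(x+L), betaP t) ≤ (1/cantorC) * ∫ t in x..y, betaP t :=
        mul_le_mul_of_nonneg_left h2 (one_div_pos.mpr cantorC_pos).le
      have h5 : ε' ≤ (1/cantorC) * ∫ t in x..(x+L), betaP t := by
        rw [hε'def]
        exact mul_le_mul_of_nonneg_left (hψ x) (one_div_pos.mpr cantorC_pos).le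
      linarith
    have key : ∀ n : ℕ, L + n * ε' ≤ gLift^[n] b - gLift^[n] a ∨
        1 ≤ gLift^[n] b - gLift^[n] a := by
      intro n
      induction n with
      | zero =>
        left
        simp [hLdef]
      | succ n ih =>
        rw [Function.iterate_succ_apply', Function.iterate_succ_apply']
        rcases ih with h | h
        · left
          have hn0 : 0 ≤ (n:ℝ) * ε' := by positivity
          have hxy : gLift^[n] a + L ≤ gLift^[n] b := by linarith
          have hs := step _ _ hxy
          push_cast
          linarith
        · right
          have hxy : gLift^[n] a + 1 ≤ gLift^[n] b := by linarith
          have h2 := gLift_add_one (gLift^[n] a)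
          have h3 := gLift_mono.monotone hxy
          linarith
    obtain ⟨n, hn⟩ : ∃ n : ℕ, 1 ≤ L + n * ε' := by
      refine ⟨⌈(1:ℝ)/ε'⌉₊, ?_⟩
      have h1 : (1:ℝ)/ε' ≤ (⌈(1:ℝ)/ε'⌉₊ : ℝ) := Nat.le_ceil _
      have h2 : (1:ℝ) ≤ (⌈(1:ℝ)/ε'⌉₊ : ℝ) * ε' := by
        rw [div_le_iff₀ hε'0] at h1
        linarith
      linarith
    refine ⟨n + 1, by omega, ?_⟩
    have hmono : L + (n:ℝ) * ε' ≤ L + ((n:ℝ) + 1) * ε' := by nlinarith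
    rcases key (n+1) with h | h
    · push_cast at h
      linarith
    · exact h
end

section
/- Let X be a compact metric space, t₀ ∈ X, (μ_j)_{j∈ℕ} a countable family of Borel probability measures on X, and δ > 0. Then there exists a finite partition of X into Borel sets such that: (i) every atom of the partition has diameter at most δ; (ii) t₀ belongs to the topological interior of the atom containing it; and (iii) the topological boundary of every atom has μ_j-measure zero for every j. -/
/-! Merge the measures into the s-finite measure `μ = ∑ j, μs j`, whose null sets are the common
null sets of the family. Every point has a ball of radius in `(0, δ/2)` whose frontier is
`μ`-null, since the frontiers of concentric balls are disjoint and so only countably many of them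
carry mass. Cover `X` by finitely many such balls, listing the ball around `t₀` first, and
disjointify: `Aₖ = Bₖ \ ⋃_{i<k} Bᵢ`. The first atom is the open ball around `t₀`, and every
frontier lies in the union of the frontiers of the balls. -/

open MeasureTheory Set Metric

theorem exists_null_frontier_ball {X : Type*} [PseudoMetricSpace X] [MeasurableSpace X]
    [OpensMeasurableSpace X] (μ : Measure X) [SFinite μ] (x : X) {a b : ℝ} (hab : a < b) :
    ∃ r ∈ Ioo a b, μ (frontier (ball x r)) = 0 := by
  simpa only [thickening_singleton] using exists_null_frontier_thickening μ {x} hab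

theorem exists_fin_succ_cons_iUnion_eq_univ {X : Type*} [TopologicalSpace X] [CompactSpace X]
    {U : X → Set X} (hU : ∀ x, U x ∈ nhds x) (x₀ : X) :
    ∃ (n : ℕ) (c : Fin (n + 1) → X), c 0 = x₀ ∧ ⋃ i, U (c i) = univ := by
  obtain ⟨t, ht⟩ := finite_cover_nhds hU
  refine ⟨t.card, Fin.cons x₀ fun i => t.equivFin.symm i, rfl, eq_univ_of_forall fun x => ?_⟩
  obtain ⟨y, hy, hxy⟩ := mem_iUnion₂.mp (ht ▸ mem_univ x)
  exact mem_iUnion.mpr ⟨(t.equivFin ⟨y, hy⟩).succ, by simpa using hxy⟩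

theorem measurableSet_disjointed {X ι : Type*} [MeasurableSpace X] [Preorder ι]
    [LocallyFiniteOrderBot ι] {B : ι → Set X} (hB : ∀ i, MeasurableSet (B i)) (i : ι) :
    MeasurableSet (disjointed B i) :=
  disjointedRec (fun _ j ht => ht.diff (hB j)) (hB i)

section Disjointed

variable {X ι : Type*} [TopologicalSpace X]

theorem null_frontier_disjointed [MeasurableSpace X] [Preorder ι] [LocallyFiniteOrderBot ι]
    {μ : Measure X} {B : ι → Set X} (hB : ∀ i, μ (frontier (B i)) = 0) (i : ι) :
    μ (frontier (disjointed B i)) = 0 :=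
  disjointedRec (p := fun s => μ (frontier s) = 0) (fun _ j ht => by
    rw [sdiff_eq]
    exact null_frontier_inter ht (by rw [frontier_compl]; exact hB j)) (hB i)

theorem mem_interior_disjointed_of_isMin [LinearOrder ι] [LocallyFiniteOrderBot ι]
    {B : ι → Set X} {i₀ : ι} (hi₀ : IsMin i₀) (hB : IsOpen (B i₀)) {x : X} (hx : x ∈ B i₀)
    {i : ι} (hxi : x ∈ disjointed B i) : x ∈ interior (disjointed B i) := by
  have hfirst : disjointed B i₀ = B i₀ := disjointed_of_isMin B hi₀
  obtain rfl : i = i₀ := by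
    by_contra hne
    exact disjoint_left.mp (disjoint_disjointed B hne) hxi (hfirst ▸ hx)
  rwa [hfirst, hB.interior_eq]

end Disjointed

theorem exists_finite_partition_small_diam_null_frontier {X : Type*} [PseudoMetricSpace X]
    [CompactSpace X] [MeasurableSpace X] [OpensMeasurableSpace X] (μ : Measure X) [SFinite μ]
    (t₀ : X) {δ : ℝ} (hδ : 0 < δ) :
    ∃ (n : ℕ) (A : Fin n → Set X),
      (∀ i, MeasurableSet (A i)) ∧
      (Pairwise fun i j => Disjoint (A i) (A j)) ∧
      (⋃ i, A i) = univ ∧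
      (∀ i, diam (A i) ≤ δ) ∧
      (∀ i, t₀ ∈ A i → t₀ ∈ interior (A i)) ∧
      (∀ i, μ (frontier (A i)) = 0) := by
  choose r hr hμr using fun x => exists_null_frontier_ball μ x (half_pos hδ)
  obtain ⟨n, c, hc₀, hcover⟩ :=
    exists_fin_succ_cons_iUnion_eq_univ (fun x => ball_mem_nhds x (hr x).1) t₀
  set B : Fin (n + 1) → Set X := fun i => ball (c i) (r (c i))
  have hdiam (i : Fin (n + 1)) : diam (disjointed B i) ≤ δ := calc
    diam (disjointed B i) ≤ diam (B i) := diam_mono (disjointed_subset B i) isBounded_ball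
    _ ≤ 2 * r (c i) := diam_ball (hr (c i)).1.le
    _ ≤ δ := by linarith [(hr (c i)).2]
  have ht₀ : t₀ ∈ B 0 := hc₀ ▸ mem_ball_self (hr (c 0)).1
  exact ⟨n + 1, disjointed B, measurableSet_disjointed fun _ => isOpen_ball.measurableSet,
    disjoint_disjointed B, iUnion_disjointed.trans hcover, hdiam,
    fun _ => mem_interior_disjointed_of_isMin (B := B) isMin_bot isOpen_ball ht₀,
    null_frontier_disjointed fun _ => hμr _⟩

/-- In a compact metric space, given a point `t₀`, a countable family of
Borel probability measures and `δ > 0`, there is a finite Borel partition whose atoms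
have diameter at most `δ`, such that `t₀` lies in the interior of the atom containing
it and the boundary of every atom is null for every measure in the family. -/
theorem exists_finite_partition_small_diam_null_boundary
    {X : Type*} [MetricSpace X] [CompactSpace X] [MeasurableSpace X] [BorelSpace X]
    (t₀ : X) (μs : ℕ → Measure X) [∀ j, IsProbabilityMeasure (μs j)]
    (δ : ℝ) (hδ : 0 < δ) :
    ∃ (n : ℕ) (A : Fin n → Set X),
      (∀ i, MeasurableSet (A i)) ∧
      (Pairwise fun i j => Disjoint (A i) (A j)) ∧
      (⋃ i, A i) = univ ∧
      (∀ i, Metric.diam (A i) ≤ δ) ∧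
      (∀ i, t₀ ∈ A i → t₀ ∈ interior (A i)) ∧
      (∀ i, ∀ j : ℕ, μs j (frontier (A i)) = 0) := by
  obtain ⟨n, A, hmeas, hdisj, hcover, hdiam, ht₀, hnull⟩ :=
    exists_finite_partition_small_diam_null_frontier (Measure.sum μs) t₀ hδ
  exact ⟨n, A, hmeas, hdisj, hcover, hdiam, ht₀, fun i => Measure.sum_apply_eq_zero.mp (hnull i)⟩
end

section
/- Let M be a compact metric space, m a finite Borel measure on M, and f : M → M a homeomorphism such that both the pushforward of m under f and the pushforward of m under f⁻¹ are absolutely continuous with respect to m. For an f-invariant Borel probability measure μ define its ergodic basin B(μ) = {x ∈ M : (1/n)·Σ_{j=0}^{n−1} φ(f^j(x)) → ∫ φ dμ for every continuous φ : M → ℝ}. Let μ₁ and μ₂ be f-invariant Borel probability measures, and let B₁, B₂ be Borel subsets of M with m(B₁ \ B(μ₁)) = 0 and m(B₂ \ B(μ₂)) = 0. If there exists an integer k ≥ 1 such that m(f^k(B₁) ∩ B₂) > 0, then μ₁ = μ₂. -/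
open MeasureTheory Filter

/-- The ergodic basin of an invariant measure: points whose Birkhoff averages of every
continuous function converge to the corresponding space average. -/
def ergodicBasin {M : Type*} [TopologicalSpace M] [MeasurableSpace M]
    (f : M → M) (μ : Measure M) : Set M :=
  {x | ∀ φ : C(M, ℝ),
    Tendsto (fun n : ℕ => (n : ℝ)⁻¹ * ∑ j ∈ Finset.range n, φ (f^[j] x)) atTop
      (nhds (∫ y, φ y ∂μ))}

/-- The basin is forward invariant. -/
lemma mem_ergodicBasin_apply {M : Type*} [TopologicalSpace M] [MeasurableSpace M]
    (f : M → M) (μ : Measure M) {x : M} (hx : x ∈ ergodicBasin f μ) :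
    f x ∈ ergodicBasin f μ := by
  intro φ
  have h := hx φ
  have key : ∀ n : ℕ, (n : ℝ)⁻¹ * ∑ j ∈ Finset.range n, φ (f^[j] (f x))
      = ((n : ℝ)⁻¹ * ((n : ℝ) + 1)) * (((n : ℝ) + 1)⁻¹ * ∑ j ∈ Finset.range (n + 1), φ (f^[j] x))
        - (n : ℝ)⁻¹ * φ x := by
    intro n
    have hsum : ∑ j ∈ Finset.range n, φ (f^[j] (f x))
        = ∑ j ∈ Finset.range (n + 1), φ (f^[j] x) - φ x := by
      have : ∑ j ∈ Finset.range n, φ (f^[j] (f x))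
          = ∑ j ∈ Finset.range n, φ (f^[j + 1] x) := by
        refine Finset.sum_congr rfl fun j _ => ?_
        rw [Function.iterate_succ_apply]
      rw [this, Finset.sum_range_succ']
      simp [Function.iterate_succ_apply]
    rcases eq_or_ne (n : ℝ) 0 with h0 | h0
    · simp [h0]
    · rw [hsum]
      field_simp
  simp only [key]
  have h1 : Tendsto (fun n : ℕ => ((n : ℝ)⁻¹ * ((n : ℝ) + 1))) atTop (nhds 1) := by
    have : Tendsto (fun n : ℕ => 1 + (n : ℝ)⁻¹) atTop (nhds (1 + 0)) :=
      tendsto_const_nhds.add tendsto_inv_atTop_nhds_zero_nat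
    simp only [add_zero] at this
    refine this.congr' ?_
    filter_upwards [eventually_ne_atTop 0] with n hn
    have : (n : ℝ) ≠ 0 := Nat.cast_ne_zero.mpr hn
    field_simp
  have h2 : Tendsto (fun n : ℕ => ((n : ℝ) + 1)⁻¹ * ∑ j ∈ Finset.range (n + 1), φ (f^[j] x))
      atTop (nhds (∫ y, φ y ∂μ)) := by
    have := h.comp (tendsto_add_atTop_nat 1)
    refine this.congr fun n => ?_
    simp only [Function.comp_apply]
    push_cast
    ring
  have h3 : Tendsto (fun n : ℕ => (n : ℝ)⁻¹ * φ x) atTop (nhds 0) := by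
    simpa using (tendsto_inv_atTop_nhds_zero_nat (𝕜 := ℝ)).mul_const (φ x)
  have := (h1.mul h2).sub h3
  simpa using this

lemma iterate_mem_ergodicBasin {M : Type*} [TopologicalSpace M] [MeasurableSpace M]
    (f : M → M) (μ : Measure M) {x : M} (hx : x ∈ ergodicBasin f μ) (k : ℕ) :
    f^[k] x ∈ ergodicBasin f μ := by
  induction k with
  | zero => simpa using hx
  | succ n ih =>
    rw [Function.iterate_succ_apply']
    exact mem_ergodicBasin_apply f μ ih

/-- Forward images of null sets are null. -/
lemma image_null {M : Type*} [MetricSpace M] [MeasurableSpace M] [BorelSpace M]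
    (m : Measure M) (f : M ≃ₜ M) (hbwd : m.map f.symm ≪ m)
    {N : Set M} (hN : m N = 0) : m (⇑f '' N) = 0 := by
  obtain ⟨N', hNN', hN'meas, hN'⟩ := exists_measurable_superset_of_null hN
  have himg : ⇑f '' N ⊆ ⇑f.symm ⁻¹' N' := by
    intro y hy
    obtain ⟨x, hx, rfl⟩ := hy
    simpa using hNN' hx
  have : m (⇑f.symm ⁻¹' N') = 0 := by
    have := hbwd hN'
    rwa [Measure.map_apply f.symm.continuous.measurable hN'meas] at this
  exact measure_mono_null himg this

lemma iterate_image_null {M : Type*} [MetricSpace M] [MeasurableSpace M] [BorelSpace M]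
    (m : Measure M) (f : M ≃ₜ M) (hbwd : m.map f.symm ≪ m)
    {N : Set M} (hN : m N = 0) (k : ℕ) : m ((⇑f)^[k] '' N) = 0 := by
  induction k with
  | zero => simpa using hN
  | succ n ih =>
    rw [show n + 1 = n.succ from rfl, Function.iterate_succ', Set.image_comp]
    exact image_null m f hbwd ih

/-- For a homeomorphism `f` of a compact metric space which is
non-singular with respect to a finite Borel reference measure `m`, distinct invariant
probability measures cannot have basins which are linked: if `B₁` and `B₂` are
contained Lebesgue modulo zero in the basins of `μ₁` and `μ₂` respectively, and some
iterate of `f` maps `B₁` onto a set meeting `B₂` with positive `m`-measure, then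
`μ₁ = μ₂`. -/
theorem eq_of_iterate_image_basin_overlap
    {M : Type*} [MetricSpace M] [CompactSpace M] [MeasurableSpace M] [BorelSpace M]
    (m : Measure M) [IsFiniteMeasure m]
    (f : M ≃ₜ M)
    (hfwd : m.map f ≪ m) (hbwd : m.map f.symm ≪ m)
    (μ₁ μ₂ : Measure M) [IsProbabilityMeasure μ₁] [IsProbabilityMeasure μ₂]
    (hinv₁ : μ₁.map f = μ₁) (hinv₂ : μ₂.map f = μ₂)
    (B₁ B₂ : Set M) (hB₁ : MeasurableSet B₁) (hB₂ : MeasurableSet B₂)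
    (hB₁b : m (B₁ \ ergodicBasin f μ₁) = 0) (hB₂b : m (B₂ \ ergodicBasin f μ₂) = 0)
    (hover : ∃ k : ℕ, 1 ≤ k ∧ 0 < m ((⇑f)^[k] '' B₁ ∩ B₂)) :
    μ₁ = μ₂ := by
  obtain ⟨k, -, hk⟩ := hover
  -- the bad set is null
  have hnull : m (((⇑f)^[k] '' (B₁ \ ergodicBasin f μ₁)) ∪ (B₂ \ ergodicBasin f μ₂)) = 0 :=
    measure_union_null (iterate_image_null m f hbwd hB₁b k) hB₂b
  -- find a point in the good set
  have hsub : ((⇑f)^[k] '' B₁ ∩ B₂) \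
      (((⇑f)^[k] '' (B₁ \ ergodicBasin f μ₁)) ∪ (B₂ \ ergodicBasin f μ₂))
      ⊆ ((⇑f)^[k] '' (B₁ ∩ ergodicBasin f μ₁)) ∩ (B₂ ∩ ergodicBasin f μ₂) := by
    rintro y ⟨⟨⟨x, hx, rfl⟩, hyB₂⟩, hbad⟩
    simp only [Set.mem_union, not_or] at hbad
    obtain ⟨hbad1, hbad2⟩ := hbad
    constructor
    · refine ⟨x, ⟨hx, ?_⟩, rfl⟩
      by_contra hxne
      exact hbad1 ⟨x, ⟨hx, hxne⟩, rfl⟩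
    · refine ⟨hyB₂, ?_⟩
      by_contra h
      exact hbad2 ⟨hyB₂, h⟩
  have hpos : 0 < m (((⇑f)^[k] '' (B₁ ∩ ergodicBasin f μ₁)) ∩ (B₂ ∩ ergodicBasin f μ₂)) := by
    refine lt_of_lt_of_le ?_ (measure_mono hsub)
    have := measure_diff_null (μ := m) (s := (⇑f)^[k] '' B₁ ∩ B₂) hnull
    rw [this]
    exact hk
  obtain ⟨y, ⟨⟨x, ⟨-, hx₁⟩, rfl⟩, -, hy₂⟩⟩ := MeasureTheory.nonempty_of_measure_ne_zero hpos.ne'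
  have hy₁ : (⇑f)^[k] x ∈ ergodicBasin f μ₁ := iterate_mem_ergodicBasin f μ₁ hx₁ k
  -- integrals agree
  have hint : ∀ φ : C(M, ℝ), ∫ z, φ z ∂μ₁ = ∫ z, φ z ∂μ₂ := fun φ =>
    tendsto_nhds_unique (hy₁ φ) (hy₂ φ)
  -- conclude
  refine ext_of_forall_lintegral_eq_of_IsFiniteMeasure fun g => ?_
  have hcont : Continuous fun z => ((g z : ℝ)) := by
    exact NNReal.continuous_coe.comp g.continuous
  have hint1 : Integrable (fun z => ((g z : ℝ))) μ₁ := hcont.integrable_of_hasCompactSupport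
    (HasCompactSupport.of_compactSpace _)
  have hint2 : Integrable (fun z => ((g z : ℝ))) μ₂ := hcont.integrable_of_hasCompactSupport
    (HasCompactSupport.of_compactSpace _)
  rw [lintegral_coe_eq_integral _ hint1, lintegral_coe_eq_integral _ hint2]
  exact congrArg ENNReal.ofReal (hint ⟨_, hcont⟩)
end
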